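/- arXiv:0808.4144 — 4 statements merged into one kernel-verified Lean document; each statement's English description precedes it below -/
import Mathlib

section
/- Let φ₀ : ℝⁿ → ℂ be smooth, vanishing on the hyperplane {λ : β(λ) = 0} for a nonzero linear functional β, and write φ₀ = β·φ₁ with φ₁ smooth. If v ∈ ℝⁿ satisfies β(v) = 1, then for every λ with |β(λ)| ≤ 1 one has |φ₁(λ)| ≤ sup over t ∈ [-1,1] of (|φ₀(λ)| + |(∂_v φ₀)(λ + t·v)|), where ∂_v is the directional derivative along v. -/
/-- Quantitative bound for the smooth division of a function vanishing on a
hyperplane by the defining linear functional. -/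
theorem stmt1 {n : ℕ} (φ₀ φ₁ : (Fin n → ℝ) → ℂ)
    (hφ₀ : ContDiff ℝ (⊤ : ℕ∞) φ₀) (hφ₁ : ContDiff ℝ (⊤ : ℕ∞) φ₁)
    (β : (Fin n → ℝ) →ₗ[ℝ] ℝ) (hβ : β ≠ 0)
    (hvan : ∀ x, β x = 0 → φ₀ x = 0)
    (hfac : ∀ x, φ₀ x = (β x : ℂ) * φ₁ x)
    (v : Fin n → ℝ) (hv : β v = 1) :
    ∀ x : Fin n → ℝ, |β x| ≤ 1 →
      ‖φ₁ x‖ ≤ sSup ((fun t : ℝ => ‖φ₀ x‖ + ‖fderiv ℝ φ₀ (x + t • v) v‖) ''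
        Set.Icc (-1 : ℝ) 1) := by
  intro x hx
  set g : ℝ → ℝ := fun t => ‖φ₀ x‖ + ‖fderiv ℝ φ₀ (x + t • v) v‖ with hg
  have hgcont : Continuous g := by
    apply Continuous.add continuous_const
    refine Continuous.norm ?_
    have h1 : Continuous (fun t : ℝ => x + t • v) := by continuity
    exact ((hφ₀.continuous_fderiv (by simp)).comp h1).clm_apply continuous_const
  have hbdd : BddAbove (g '' Set.Icc (-1 : ℝ) 1) :=
    (isCompact_Icc.image hgcont).bddAbove
  have hmem : ∀ t ∈ Set.Icc (-1 : ℝ) 1,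
      ‖fderiv ℝ φ₀ (x + t • v) v‖ ≤ sSup (g '' Set.Icc (-1 : ℝ) 1) := by
    intro t ht
    have : g t ≤ sSup (g '' Set.Icc (-1 : ℝ) 1) :=
      le_csSup hbdd (Set.mem_image_of_mem g ht)
    have h0 : (0 : ℝ) ≤ ‖φ₀ x‖ := norm_nonneg _
    simp only [hg] at this
    linarith
  have hdiffφ₀ : Differentiable ℝ φ₀ := hφ₀.differentiable (by simp)
  by_cases hb : β x = 0
  · -- φ₁ x equals the directional derivative of φ₀ at x
    set B : (Fin n → ℝ) →L[ℝ] ℝ := LinearMap.toContinuousLinearMap β with hB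
    have hβderiv : HasFDerivAt (fun y => ((β y : ℝ) : ℂ))
        (Complex.ofRealCLM.comp B) x :=
      Complex.ofRealCLM.hasFDerivAt.comp x B.hasFDerivAt
    have hφ₁d : HasFDerivAt φ₁ (fderiv ℝ φ₁ x) x :=
      ((hφ₁.differentiable (by simp)) x).hasFDerivAt
    have hprod := hβderiv.mul' hφ₁d
    have hφ₀eq : φ₀ = fun y => ((β y : ℝ) : ℂ) * φ₁ y := funext hfac
    have hφ₀d : HasFDerivAt φ₀
        (((β x : ℝ) : ℂ) • fderiv ℝ φ₁ x +
          (Complex.ofRealCLM.comp B).smulRight (φ₁ x)) x := by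
      rw [hφ₀eq]; exact hprod
    have hfd : fderiv ℝ φ₀ x v = φ₁ x := by
      rw [hφ₀d.fderiv]
      simp [hb, hv, B]
    have hx0 : x + (0 : ℝ) • v = x := by simp
    have : g 0 ≤ sSup (g '' Set.Icc (-1 : ℝ) 1) :=
      le_csSup hbdd (Set.mem_image_of_mem g (by norm_num))
    simp only [hg, hx0, hfd] at this
    have h0 : (0 : ℝ) ≤ ‖φ₀ x‖ := norm_nonneg _
    linarith
  · -- mean value inequality on the segment from -β x to 0
    set f : ℝ → ℂ := fun t => φ₀ (x + t • v) with hf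
    have hderiv : ∀ t ∈ Set.Icc (-1 : ℝ) 1,
        HasDerivWithinAt f (fderiv ℝ φ₀ (x + t • v) v) (Set.Icc (-1 : ℝ) 1) t := by
      intro t ht
      have h1 : HasDerivAt (fun t : ℝ => x + t • v) v t := by
        simpa using ((hasDerivAt_id t).smul_const v).const_add x
      exact ((hdiffφ₀ (x + t • v)).hasFDerivAt.comp_hasDerivAt t h1).hasDerivWithinAt
    have hC := Convex.norm_image_sub_le_of_norm_hasDerivWithin_le hderiv hmem
      (convex_Icc _ _) (show (-(β x) : ℝ) ∈ Set.Icc (-1 : ℝ) 1 by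
        obtain ⟨h1, h2⟩ := abs_le.mp hx
        constructor <;> linarith)
      (show (0 : ℝ) ∈ Set.Icc (-1 : ℝ) 1 by norm_num)
    have hf0 : f 0 = φ₀ x := by simp [hf]
    have hfneg : f (-(β x)) = 0 := by
      apply hvan
      simp [hv]
    rw [hf0, hfneg, sub_zero, zero_sub, norm_neg, Real.norm_eq_abs, abs_neg] at hC
    -- ‖φ₀ x‖ = |β x| * ‖φ₁ x‖
    have hnorm : ‖φ₀ x‖ = |β x| * ‖φ₁ x‖ := by
      rw [hfac x, norm_mul, Complex.norm_real, Real.norm_eq_abs]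
    rw [hnorm] at hC
    have habs : 0 < |β x| := abs_pos.mpr hb
    rw [mul_comm] at hC
    exact le_of_mul_le_mul_right hC habs
end

section
/- Let Σ be a finite root system in a Euclidean space V with Weyl group W, let r be a linear automorphism of V stabilizing Σ and a chamber 𝔠 of Σ, and let L = V^r be the fixed space of r. Suppose α₁, …, α_n ∈ Σ are roots whose restrictions to L are linearly independent functionals on L spanning the annihilator in L* of a subspace V₀ ⊆ L, and let w₀ = s₁⋯s_n be the product of the corresponding reflections. If H ∈ closure(𝔠) is fixed by r·w₀, then H is fixed by w₀, and moreover α_i(H) = 0 for all i, so that H ∈ V₀. -/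
/-!
Since `r` is orthogonal and `r (w₀ H) = H`, the vector `w₀ H - H = w₀ H - r (w₀ H)` is
orthogonal to the fixed space `L` of `r`. It also lies in the span of the `αᵢ`, because each
reflection moves a point by a multiple of its root. A combination `∑ cᵢ αᵢ` orthogonal to `L`
has `∑ cᵢ αᵢ|_L = 0`, so all `cᵢ = 0` and `w₀ H = H`. Finally, for linearly independent roots,
`s₁ ⋯ sₘ` fixes `H` only if `s₂ ⋯ sₘ` and `s₁` do: `H - s₂ ⋯ sₘ H` lies both in `ℝ α₁` and in
the span of `α₂, …, αₘ`. Induction gives `αᵢ(H) = 0`.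
-/

open scoped RealInnerProductSpace

noncomputable def reflRoot {n : ℕ} (α : EuclideanSpace ℝ (Fin n)) :
    EuclideanSpace ℝ (Fin n) ≃ₗᵢ[ℝ] EuclideanSpace ℝ (Fin n) :=
  Submodule.reflection ((ℝ ∙ α)ᗮ)

def regularSet {n : ℕ} (S : Finset (EuclideanSpace ℝ (Fin n))) :
    Set (EuclideanSpace ℝ (Fin n)) :=
  {x | ∀ α ∈ S, ⟪α, x⟫ ≠ 0}

def IsChamber {n : ℕ} (S : Finset (EuclideanSpace ℝ (Fin n)))
    (c : Set (EuclideanSpace ℝ (Fin n))) : Prop :=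
  ∃ x ∈ regularSet S, c = connectedComponentIn (regularSet S) x

noncomputable def fixedSpace {n : ℕ}
    (r : EuclideanSpace ℝ (Fin n) ≃ₗᵢ[ℝ] EuclideanSpace ℝ (Fin n)) :
    Submodule ℝ (EuclideanSpace ℝ (Fin n)) :=
  LinearMap.ker ((r.toLinearEquiv : EuclideanSpace ℝ (Fin n) →ₗ[ℝ]
    EuclideanSpace ℝ (Fin n)) - LinearMap.id)

section
variable {E ι : Type*} [NormedAddCommGroup E] [InnerProductSpace ℝ E] {L : Submodule ℝ E}
  {α : ι → E}

theorem linearIndependent_of_linearIndependent_domRestrict_innerSL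
    (hind : LinearIndependent ℝ fun i => ((innerSL ℝ (α i)).toLinearMap).domRestrict L) :
    LinearIndependent ℝ α :=
  hind.of_comp ((innerₗ E).compl₂ L.subtype)

theorem eq_zero_of_mem_span_of_linearIndependent_domRestrict_innerSL
    (hind : LinearIndependent ℝ fun i => ((innerSL ℝ (α i)).toLinearMap).domRestrict L)
    {v : E} (hv : v ∈ Submodule.span ℝ (Set.range α)) (horth : ∀ x ∈ L, ⟪v, x⟫ = 0) :
    v = 0 := by
  rw [← Finsupp.range_linearCombination] at hv
  obtain ⟨c, rfl⟩ := hv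
  have hc : (innerₗ E).compl₂ L.subtype (Finsupp.linearCombination ℝ α c) = 0 :=
    LinearMap.ext fun x => horth x x.2
  rw [Finsupp.apply_linearCombination] at hc
  rw [linearIndependent_iff.mp hind c hc, map_zero]

end

section
variable {n : ℕ}

theorem reflRoot_apply (α x : EuclideanSpace ℝ (Fin n)) :
    reflRoot α x = x - (2 * (⟪α, x⟫ / ‖α‖ ^ 2)) • α := by
  rw [reflRoot, Submodule.reflection_orthogonal_apply, Submodule.reflection_singleton_apply]
  simp only [RCLike.ofReal_real_eq_id, id, mul_smul]
  module

theorem reflRoot_apply_eq_self_iff {α x : EuclideanSpace ℝ (Fin n)} :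
    reflRoot α x = x ↔ ⟪α, x⟫ = 0 := by
  rw [reflRoot, Submodule.reflection_eq_self_iff,
    Submodule.mem_orthogonal_singleton_iff_inner_right]

theorem reflRoot_apply_sub_mem_span (α x : EuclideanSpace ℝ (Fin n)) :
    reflRoot α x - x ∈ ℝ ∙ α := by
  rw [reflRoot_apply, sub_sub_cancel_left]
  exact Submodule.neg_mem _ (Submodule.smul_mem _ _ (Submodule.mem_span_singleton_self α))

theorem prod_reflRoot_apply_sub_mem_span {m : ℕ} (α : Fin m → EuclideanSpace ℝ (Fin n))
    (x : EuclideanSpace ℝ (Fin n)) :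
    (List.ofFn fun i => reflRoot (α i)).prod x - x ∈ Submodule.span ℝ (Set.range α) := by
  refine List.prod_induction (fun g : EuclideanSpace ℝ (Fin n) ≃ₗᵢ[ℝ] EuclideanSpace ℝ (Fin n) =>
      ∀ y, g y - y ∈ Submodule.span ℝ (Set.range α))
    (fun g h hg hh y => ?_) (fun y => by simp) ?_ x
  · rw [LinearIsometryEquiv.coe_mul, Function.comp_apply, ← sub_add_sub_cancel]
    exact Submodule.add_mem _ (hg _) (hh y)
  · simp only [List.mem_ofFn, forall_exists_index, forall_apply_eq_imp_iff]
    intro i y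
    exact Submodule.span_mono (Set.singleton_subset_iff.mpr (Set.mem_range_self i))
      (reflRoot_apply_sub_mem_span _ _)

theorem inner_eq_zero_of_prod_reflRoot_apply_eq_self {x : EuclideanSpace ℝ (Fin n)} :
    ∀ {m : ℕ} {α : Fin m → EuclideanSpace ℝ (Fin n)}, LinearIndependent ℝ α →
      (List.ofFn fun i => reflRoot (α i)).prod x = x → ∀ i, ⟪α i, x⟫ = 0
  | 0, _, _, _ => fun i => i.elim0
  | m + 1, α, hα, hx => by
    rw [List.ofFn_succ, List.prod_cons, LinearIsometryEquiv.coe_mul, Function.comp_apply] at hx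
    set P := (List.ofFn fun i : Fin m => reflRoot (α i.succ)).prod
    obtain ⟨hα_tail, hα_head⟩ := linearIndependent_finSucc.mp hα
    have hPx : P x = x := by
      have h_tail : P x - x ∈ Submodule.span ℝ (Set.range (Fin.tail α)) :=
        prod_reflRoot_apply_sub_mem_span _ x
      have h_head : P x - x ∈ ℝ ∙ α 0 := by
        simpa [hx] using Submodule.neg_mem _ (reflRoot_apply_sub_mem_span (α 0) (P x))
      exact sub_eq_zero.mp <| Submodule.disjoint_def.mp
        (Submodule.disjoint_span_singleton_of_notMem hα_head) _ h_tail h_head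
    rw [hPx] at hx
    exact Fin.cases (reflRoot_apply_eq_self_iff.mp hx)
      (inner_eq_zero_of_prod_reflRoot_apply_eq_self hα_tail hPx)

theorem mem_fixedSpace_iff {r : EuclideanSpace ℝ (Fin n) ≃ₗᵢ[ℝ] EuclideanSpace ℝ (Fin n)}
    {x : EuclideanSpace ℝ (Fin n)} : x ∈ fixedSpace r ↔ r x = x := by
  simp [fixedSpace, sub_eq_zero]

theorem inner_sub_apply_eq_zero_of_mem_fixedSpace
    {r : EuclideanSpace ℝ (Fin n) ≃ₗᵢ[ℝ] EuclideanSpace ℝ (Fin n)}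
    {x : EuclideanSpace ℝ (Fin n)} (hx : x ∈ fixedSpace r) (y : EuclideanSpace ℝ (Fin n)) :
    ⟪y - r y, x⟫ = 0 := by
  rw [inner_sub_left, ← r.inner_map_map y x, mem_fixedSpace_iff.mp hx, sub_self]

end

theorem stmt9_general {n m : ℕ}
    (r : EuclideanSpace ℝ (Fin n) ≃ₗᵢ[ℝ] EuclideanSpace ℝ (Fin n))
    (α : Fin m → EuclideanSpace ℝ (Fin n))
    (hind : LinearIndependent ℝ
      (fun i => ((innerSL ℝ (α i)).toLinearMap).domRestrict (fixedSpace r)))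
    (V₀ : Submodule ℝ (EuclideanSpace ℝ (Fin n)))
    (hann : ∀ H : EuclideanSpace ℝ (Fin n),
      H ∈ V₀ ↔ (r H = H ∧ ∀ i, ⟪α i, H⟫ = 0))
    (H : EuclideanSpace ℝ (Fin n))
    (hfix : r ((List.ofFn fun i => reflRoot (α i)).prod H) = H) :
    (List.ofFn fun i => reflRoot (α i)).prod H = H ∧
      (∀ i, ⟪α i, H⟫ = 0) ∧ H ∈ V₀ := by
  have hw : (List.ofFn fun i => reflRoot (α i)).prod H = H := by
    refine sub_eq_zero.mp <| eq_zero_of_mem_span_of_linearIndependent_domRestrict_innerSL hind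
      (prod_reflRoot_apply_sub_mem_span α H) fun x hx => ?_
    simpa only [hfix] using inner_sub_apply_eq_zero_of_mem_fixedSpace hx
      ((List.ofFn fun i => reflRoot (α i)).prod H)
  have hαH := inner_eq_zero_of_prod_reflRoot_apply_eq_self
    (linearIndependent_of_linearIndependent_domRestrict_innerSL hind) hw
  exact ⟨hw, hαH, (hann H).mpr ⟨by rwa [hw] at hfix, hαH⟩⟩

/-- Let `r` stabilize the root system `S` and a chamber `c`, let `L` be the fixed
space of `r`, and let `α₁, …, α_m ∈ S` have restrictions to `L` that are linearly
independent functionals spanning the annihilator in `L*` of a subspace `V₀ ⊆ L`.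
If `H` lies in the closure of `c` and is fixed by `r·w₀`, where `w₀ = s₁⋯s_m` is
the product of the corresponding reflections, then `H` is fixed by `w₀`, every
`α_i(H) = 0`, and `H ∈ V₀`. -/
theorem stmt9 {n m : ℕ} (S : Finset (EuclideanSpace ℝ (Fin n)))
    (hS0 : (0 : EuclideanSpace ℝ (Fin n)) ∉ S)
    (hSrefl : ∀ α ∈ S, ∀ β ∈ S, reflRoot α β ∈ S)
    (r : EuclideanSpace ℝ (Fin n) ≃ₗᵢ[ℝ] EuclideanSpace ℝ (Fin n))
    (hrS : ∀ α ∈ S, r α ∈ S)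
    (c : Set (EuclideanSpace ℝ (Fin n))) (hc : IsChamber S c) (hrc : ⇑r '' c = c)
    (α : Fin m → EuclideanSpace ℝ (Fin n)) (hαS : ∀ i, α i ∈ S)
    (hind : LinearIndependent ℝ
      (fun i => ((innerSL ℝ (α i)).toLinearMap).domRestrict (fixedSpace r)))
    (V₀ : Submodule ℝ (EuclideanSpace ℝ (Fin n))) (hV₀L : V₀ ≤ fixedSpace r)
    (hann : ∀ H : EuclideanSpace ℝ (Fin n),
      H ∈ V₀ ↔ (r H = H ∧ ∀ i, ⟪α i, H⟫ = 0))
    (H : EuclideanSpace ℝ (Fin n)) (hH : H ∈ closure c)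
    (hfix : r ((List.ofFn fun i => reflRoot (α i)).prod H) = H) :
    (List.ofFn fun i => reflRoot (α i)).prod H = H ∧
      (∀ i, ⟪α i, H⟫ = 0) ∧ H ∈ V₀ :=
  stmt9_general r α hind V₀ hann H hfix
end

section
/- Let p : ℂ → ℂ be a polynomial. If for every t > 0 we define F(t) = Σ_{v ∈ S} p_v(t)·e^{i θ_v t} with S finite, θ_v ∈ ℝ pairwise distinct, and p_v polynomials, and if F(t) tends to 0 as t → +∞, then every p_v is the zero polynomial. -/
/-!
Dividing by `t ^ d`, where `d` bounds the degrees, shows that `∑ v, (p v).coeff d * e^{iθ_v t}`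
tends to `0`, so it suffices to treat constant coefficients and descend in `d`. For constant
coefficients `c_v`, induct on the number of frequencies: the combination
`F (t + r) - e^{iθ_w r} F t` kills the frequency `θ_w` and multiplies `c_v` by
`e^{iθ_v r} - e^{iθ_w r}`, which is nonzero for `r = π / (θ_v - θ_w)`. Once only `θ_w` is left,
`‖F t‖ = ‖c_w‖` is constant, hence `0`.
-/

open Filter Topology Complex Polynomial

lemma norm_exp_I_mul_ofReal_mul_ofReal (θ t : ℝ) : ‖exp (I * θ * t)‖ = 1 := by
  rw [mul_assoc, ← ofReal_mul, norm_exp_I_mul_ofReal]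

lemma tendsto_mul_exp_I_mul_of_tendsto_zero {f : ℝ → ℂ} (hf : Tendsto f atTop (𝓝 0)) (θ : ℝ) :
    Tendsto (fun t : ℝ => f t * exp (I * θ * t)) atTop (𝓝 0) := by
  rw [tendsto_zero_iff_norm_tendsto_zero] at hf ⊢
  refine hf.congr fun t => ?_
  rw [norm_mul, norm_exp_I_mul_ofReal_mul_ofReal, mul_one]

lemma tendsto_eval_div_pow_atTop (p : ℂ[X]) {d : ℕ} (hd : p.natDegree ≤ d) :
    Tendsto (fun t : ℝ => p.eval (t : ℂ) / (t : ℂ) ^ d) atTop (𝓝 (p.coeff d)) := by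
  have hpow : ∀ i < d, Tendsto (fun t : ℝ => (t : ℂ) ^ i / (t : ℂ) ^ d) atTop (𝓝 0) := by
    intro i hi
    refine ((continuous_ofReal.tendsto 0).comp (tendsto_pow_div_pow_atTop_zero hi)).congr
      fun t => ?_
    simp
  have hlow : Tendsto (fun t : ℝ => ∑ i ∈ Finset.range d, p.coeff i * ((t : ℂ) ^ i / (t : ℂ) ^ d))
      atTop (𝓝 0) := by
    simpa using tendsto_finsetSum _ fun i hi =>
      (hpow i (Finset.mem_range.1 hi)).const_mul (p.coeff i)
  rw [← zero_add (p.coeff d)]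
  refine (hlow.add_const (p.coeff d)).congr' ?_
  filter_upwards [eventually_ne_atTop 0] with t ht
  have ht' : (t : ℂ) ^ d ≠ 0 := pow_ne_zero _ (ofReal_ne_zero.2 ht)
  rw [eval_eq_sum_range' (Nat.lt_succ_of_le hd), Finset.sum_range_succ, add_div, Finset.sum_div,
    mul_div_assoc, div_self ht', mul_one]
  simp only [mul_div_assoc]

lemma tendsto_div_pow_atTop_of_tendsto_zero {f : ℝ → ℂ} (hf : Tendsto f atTop (𝓝 0)) (d : ℕ) :
    Tendsto (fun t : ℝ => f t / (t : ℂ) ^ d) atTop (𝓝 0) := by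
  refine squeeze_zero_norm' ?_ (tendsto_norm_zero.comp hf)
  filter_upwards [eventually_ge_atTop 1] with t ht
  rw [norm_div, norm_pow, norm_real, Real.norm_of_nonneg (by linarith)]
  exact div_le_self (norm_nonneg _) (one_le_pow₀ ht)

lemma tendsto_sum_mul_exp_shift_sub {ι : Type*} (s : Finset ι) (θ : ι → ℝ) (c : ι → ℂ)
    (h : Tendsto (fun t : ℝ => ∑ v ∈ s, c v * exp (I * θ v * t)) atTop (𝓝 0)) (r μ : ℝ) :
    Tendsto (fun t : ℝ => ∑ v ∈ s,
      c v * (exp (I * θ v * r) - exp (I * μ * r)) * exp (I * θ v * t)) atTop (𝓝 0) := by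
  have hshift := (h.comp (tendsto_atTop_add_const_right atTop r tendsto_id)).sub
    (h.const_mul (exp (I * μ * r)))
  rw [mul_zero, sub_zero] at hshift
  refine hshift.congr fun t => ?_
  simp only [Function.comp_apply, id, Finset.mul_sum, ← Finset.sum_sub_distrib]
  refine Finset.sum_congr rfl fun v _ => ?_
  rw [ofReal_add, mul_add, exp_add]
  ring

theorem eq_zero_of_tendsto_sum_mul_exp {ι : Type*} (s : Finset ι) (θ : ι → ℝ)
    (hθ : Set.InjOn θ s) (c : ι → ℂ)
    (h : Tendsto (fun t : ℝ => ∑ v ∈ s, c v * exp (I * θ v * t)) atTop (𝓝 0)) :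
    ∀ v ∈ s, c v = 0 := by
  classical
  induction s using Finset.induction_on generalizing c with
  | empty => simp
  | insert w s hw ih =>
    have hs : ∀ v ∈ s, c v = 0 := by
      intro v hv
      have hvw : θ v - θ w ≠ 0 := sub_ne_zero.2 fun he =>
        hw (hθ (by simp [hv]) (by simp) he ▸ hv)
      set r := Real.pi / (θ v - θ w)
      have hr := ih (hθ.mono (Finset.coe_subset.2 (Finset.subset_insert w s)))
        (fun u => c u * (exp (I * θ u * r) - exp (I * θ w * r)))
        (by simpa [Finset.sum_insert hw] using tendsto_sum_mul_exp_shift_sub _ θ c h r (θ w)) v hv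
      have hexp : exp (I * θ v * r) = - exp (I * θ w * r) := by
        have hvw' : (θ v - θ w : ℂ) ≠ 0 := by exact_mod_cast hvw
        have : I * θ v * r = I * θ w * r + Real.pi * I := by
          simp only [r]; push_cast; field_simp; ring
        rw [this, exp_add, exp_pi_mul_I]; ring
      refine (mul_eq_zero.1 hr).resolve_right ?_
      rw [hexp, sub_eq_add_neg, ← neg_add, ← two_mul]
      exact neg_ne_zero.2 (mul_ne_zero two_ne_zero (exp_ne_zero _))
    refine Finset.forall_mem_insert _ _ _ |>.2 ⟨?_, hs⟩
    have hsingle : Tendsto (fun t : ℝ => c w * exp (I * θ w * t)) atTop (𝓝 0) := by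
      refine h.congr fun t => ?_
      rw [Finset.sum_insert hw, Finset.sum_eq_zero fun v hv => by rw [hs v hv, zero_mul], add_zero]
    have hnorm : Tendsto (fun _ : ℝ => ‖c w‖) atTop (𝓝 0) :=
      (tendsto_zero_iff_norm_tendsto_zero.1 hsingle).congr fun t => by
        rw [norm_mul, norm_exp_I_mul_ofReal_mul_ofReal, mul_one]
    exact norm_eq_zero.1 (tendsto_nhds_unique tendsto_const_nhds hnorm)

theorem coeff_eq_zero_of_tendsto_sum_eval_mul_exp {ι : Type*} (s : Finset ι) (θ : ι → ℝ)
    (hθ : Set.InjOn θ s) (p : ι → ℂ[X]) {d : ℕ} (hd : ∀ v ∈ s, (p v).natDegree ≤ d)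
    (h : Tendsto (fun t : ℝ => ∑ v ∈ s, (p v).eval (t : ℂ) * exp (I * θ v * t)) atTop (𝓝 0)) :
    ∀ v ∈ s, (p v).coeff d = 0 := by
  refine eq_zero_of_tendsto_sum_mul_exp s θ hθ _ ?_
  have hdiv := tendsto_div_pow_atTop_of_tendsto_zero h d
  have hlower : Tendsto (fun t : ℝ => ∑ v ∈ s,
      ((p v).eval (t : ℂ) / (t : ℂ) ^ d - (p v).coeff d) * exp (I * θ v * t)) atTop (𝓝 0) := by
    simpa using tendsto_finsetSum s fun v hv => tendsto_mul_exp_I_mul_of_tendsto_zero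
      (tendsto_sub_nhds_zero_iff.2 (tendsto_eval_div_pow_atTop (p v) (hd v hv))) (θ v)
  have hdiff := hdiv.sub hlower
  rw [sub_zero] at hdiff
  refine hdiff.congr fun t => ?_
  rw [Finset.sum_div, ← Finset.sum_sub_distrib]
  refine Finset.sum_congr rfl fun v _ => ?_
  ring

theorem eq_zero_of_tendsto_sum_eval_mul_exp {ι : Type*} (s : Finset ι) (θ : ι → ℝ)
    (hθ : Set.InjOn θ s) (p : ι → ℂ[X])
    (h : Tendsto (fun t : ℝ => ∑ v ∈ s, (p v).eval (t : ℂ) * exp (I * θ v * t)) atTop (𝓝 0)) :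
    ∀ v ∈ s, p v = 0 := by
  suffices ∀ d, (∀ v ∈ s, (p v).natDegree ≤ d) → ∀ v ∈ s, p v = 0 from
    this _ fun v hv => Finset.le_sup (f := fun v => (p v).natDegree) hv
  intro d
  induction d with
  | zero =>
    intro hd v hv
    rw [eq_C_of_natDegree_le_zero (hd v hv),
      coeff_eq_zero_of_tendsto_sum_eval_mul_exp s θ hθ p hd h v hv, C_0]
  | succ d ih =>
    intro hd
    exact ih fun v hv => natDegree_le_pred (hd v hv)
      (coeff_eq_zero_of_tendsto_sum_eval_mul_exp s θ hθ p hd h v hv)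

/-- If a finite sum `∑ p_v(t) e^{iθ_v t}` with pairwise distinct real
frequencies `θ_v` and polynomial coefficients tends to `0` as `t → +∞`, then
all the polynomials vanish. -/
theorem stmt16 {k : ℕ} (θ : Fin k → ℝ) (hθ : Function.Injective θ)
    (p : Fin k → Polynomial ℂ)
    (h : Filter.Tendsto
      (fun t : ℝ => ∑ v, (p v).eval (t : ℂ) * Complex.exp (Complex.I * θ v * t))
      Filter.atTop (nhds 0)) :
    ∀ v, p v = 0 :=
  fun v => eq_zero_of_tendsto_sum_eval_mul_exp Finset.univ θ hθ.injOn p h v (Finset.mem_univ v)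
end

section
/- Let f : ℂ → ℂ be holomorphic on {s : Re s > 0}, continuous up to the boundary away from a finite set of points s₁, …, s_k on the imaginary axis, and suppose f is given on {Re s > σ₀} by an absolutely convergent Laplace transform f(s) = ∫₀^∞ g(t)e^{-st} dt of a continuous function g. If moreover f extends holomorphically across every boundary point except the s_j, and g(t) = Σ_j q_j(t)e^{s_j t} + h(t) with polynomials q_j and rapidly decreasing h, then: g(t) → 0 as t → ∞ implies all q_j = 0. -/
/-!
Since `h → 0`, the exponential polynomial `F t = ∑ j, q_j(t) e^{s_j t}` tends to `0`. If all `q_j`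
have degree at most `N`, then `F t / t^N - ∑ j, c_j e^{s_j t} → 0`, where `c_j` is the coefficient
of `t^N` in `q_j`, because `|e^{s_j t}| = 1`. So `∑ j, c_j e^{s_j t} → 0`. Multiplying by `e^{-s_l t}`
and averaging over `[0, n]` gives `c_l` in the limit, since the mean of `e^{(s_j - s_l) t}` tends to
`0` for `j ≠ l`. The averages also tend to `0` by Cesàro, so every `c_l = 0`. Downward induction on
`N` then gives `q_j = 0`.
-/

open Filter Complex Finset Topology Polynomial

theorem tendsto_zero_of_forall_mul_norm_le {E : Type*} [NormedAddCommGroup E] {h : ℝ → E} {C : ℝ}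
    (hC : ∀ t : ℝ, 0 ≤ t → t * ‖h t‖ ≤ C) : Tendsto h atTop (𝓝 0) := by
  rw [tendsto_zero_iff_norm_tendsto_zero]
  refine squeeze_zero' (Eventually.of_forall fun t => norm_nonneg _) ?_
    (tendsto_const_nhds.div_atTop tendsto_id : Tendsto (fun t : ℝ => C / t) atTop (𝓝 0))
  filter_upwards [eventually_gt_atTop 0] with t ht
  rw [le_div_iff₀ ht, mul_comm]
  exact hC t ht.le

theorem tendsto_inv_smul_intervalIntegral_of_tendsto_zero {E : Type*} [NormedAddCommGroup E]
    [NormedSpace ℝ E] {u : ℝ → E} (hu : Continuous u) (h0 : Tendsto u atTop (𝓝 0)) :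
    Tendsto (fun n : ℕ => (n : ℝ)⁻¹ • ∫ t in (0 : ℝ)..n, u t) atTop (𝓝 0) := by
  set a : ℕ → E := fun i => ∫ t in (i : ℝ)..i + 1, u t
  have hsum (n : ℕ) : ∫ t in (0 : ℝ)..n, u t = ∑ i ∈ range n, a i := by
    simpa using (intervalIntegral.sum_integral_adjacent_intervals (a := fun i : ℕ => (i : ℝ))
      (μ := MeasureTheory.volume) (n := n) fun i _ => hu.intervalIntegrable _ _).symm
  have ha : Tendsto a atTop (𝓝 0) := by
    rw [Metric.tendsto_atTop] at h0 ⊢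
    intro ε hε
    obtain ⟨M, hM⟩ := h0 (ε / 2) (half_pos hε)
    obtain ⟨N, hN⟩ := exists_nat_ge M
    refine ⟨N, fun n hn => ?_⟩
    have hbound : ‖a n‖ ≤ ε / 2 * |(n + 1 : ℝ) - n| := by
      refine intervalIntegral.norm_integral_le_of_norm_le_const fun x hx => ?_
      rw [Set.uIoc_of_le (by linarith)] at hx
      have : (N : ℝ) ≤ n := by exact_mod_cast hn
      simpa using (hM x (by linarith [hx.1])).le
    rw [add_sub_cancel_left, abs_one, mul_one] at hbound
    rw [dist_zero_right]
    linarith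
  simpa only [hsum] using ha.cesaro_smul

theorem norm_exp_mul_ofReal_of_re_eq_zero {z : ℂ} (hz : z.re = 0) (t : ℝ) :
    ‖exp (z * t)‖ = 1 := by
  simp [Complex.norm_exp, hz]

open Classical in
theorem tendsto_inv_smul_intervalIntegral_exp_mul {z : ℂ} (hz : z.re = 0) :
    Tendsto (fun n : ℕ => (n : ℝ)⁻¹ • ∫ t in (0 : ℝ)..n, exp (z * t)) atTop
      (𝓝 (if z = 0 then 1 else 0)) := by
  split_ifs with hz0
  · refine tendsto_const_nhds.congr' ?_
    filter_upwards [eventually_ge_atTop 1] with n hn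
    have : (n : ℂ) ≠ 0 := by norm_cast; omega
    simp [hz0, this]
  · rw [tendsto_zero_iff_norm_tendsto_zero]
    refine squeeze_zero (fun n => norm_nonneg _) (fun n => ?_)
      (by simpa using (tendsto_inv_atTop_nhds_zero_nat (𝕜 := ℝ)).mul_const (2 / ‖z‖))
    rw [integral_exp_mul_complex hz0, norm_smul, norm_inv, Real.norm_natCast, norm_div]
    gcongr
    calc ‖exp (z * (n : ℝ)) - exp (z * (0 : ℝ))‖ ≤ ‖exp (z * (n : ℝ))‖ + ‖exp (z * (0 : ℝ))‖ :=
          norm_sub_le _ _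
      _ = 2 := by
        rw [norm_exp_mul_ofReal_of_re_eq_zero hz, norm_exp_mul_ofReal_of_re_eq_zero hz]
        norm_num

theorem eq_zero_of_tendsto_sum_mul_exp_s19 {ι : Type*} [Fintype ι] {s : ι → ℂ}
    (hs : Function.Injective s) (hre : ∀ j, (s j).re = 0) {c : ι → ℂ}
    (hlim : Tendsto (fun t : ℝ => ∑ j, c j * exp (s j * t)) atTop (𝓝 0)) (l : ι) :
    c l = 0 := by
  classical
  set u : ℝ → ℂ := fun t => ∑ j, c j * exp ((s j - s l) * t)
  have hu : ∀ t : ℝ, u t = exp (-s l * t) * ∑ j, c j * exp (s j * t) := fun t => by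
    simp only [u, Finset.mul_sum]
    refine Finset.sum_congr rfl fun j _ => ?_
    rw [mul_left_comm, ← Complex.exp_add]
    ring_nf
  have hu0 : Tendsto u atTop (𝓝 0) := by
    rw [tendsto_zero_iff_norm_tendsto_zero] at hlim ⊢
    refine hlim.congr fun t => ?_
    rw [hu, norm_mul, norm_exp_mul_ofReal_of_re_eq_zero (by simp [hre l]), one_mul]
  have hmean : Tendsto (fun n : ℕ => (n : ℝ)⁻¹ • ∫ t in (0 : ℝ)..n, u t) atTop (𝓝 (c l)) := by
    have hterm (j : ι) := (tendsto_inv_smul_intervalIntegral_exp_mul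
      (z := s j - s l) (by simp [hre])).const_mul (c j)
    have hsum := tendsto_finsetSum univ fun j _ => hterm j
    simp only [sub_eq_zero, hs.eq_iff, mul_ite, mul_one, mul_zero, Finset.sum_ite_eq',
      Finset.mem_univ, if_true] at hsum
    refine hsum.congr fun n => ?_
    simp only [u]
    rw [intervalIntegral.integral_finsetSum (f := fun j (t : ℝ) => c j * exp ((s j - s l) * t))
      fun j _ => (by fun_prop : Continuous _).intervalIntegrable _ _, Finset.smul_sum]
    refine Finset.sum_congr rfl fun j _ => ?_
    rw [intervalIntegral.integral_const_mul, mul_smul_comm]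
  exact tendsto_nhds_unique hmean (tendsto_inv_smul_intervalIntegral_of_tendsto_zero
    (continuous_finsetSum _ fun j _ => continuous_const.mul (by fun_prop)) hu0)

theorem Polynomial.tendsto_eval_ofReal_div_pow_atTop {p : ℂ[X]} {N : ℕ} (hp : p.natDegree ≤ N) :
    Tendsto (fun t : ℝ => p.eval (t : ℂ) / (t : ℂ) ^ N) atTop (𝓝 (p.coeff N)) := by
  have hlow : Tendsto (fun t : ℝ => ∑ i ∈ range N, p.coeff i * ((t : ℂ) ^ i / (t : ℂ) ^ N))
      atTop (𝓝 0) := by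
    rw [← Finset.sum_const_zero (s := range N)]
    refine tendsto_finsetSum _ fun i hi => ?_
    have hreal := (continuous_ofReal.tendsto 0).comp
      (tendsto_pow_div_pow_atTop_zero (𝕜 := ℝ) (mem_range.1 hi))
    simpa using hreal.const_mul (p.coeff i)
  refine (zero_add (p.coeff N) ▸ hlow.add_const (p.coeff N)).congr' ?_
  filter_upwards [eventually_gt_atTop 0] with t ht
  have htN : (t : ℂ) ^ N ≠ 0 := pow_ne_zero _ (ofReal_ne_zero.2 ht.ne')
  rw [eval_eq_sum_range' (Nat.lt_succ_of_le hp), Finset.sum_range_succ, add_div, Finset.sum_div]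
  simp only [mul_div_assoc, div_self htN, mul_one]

theorem coeff_eq_zero_of_tendsto_sum_eval_mul_exp_s19 {ι : Type*} [Fintype ι] {s : ι → ℂ}
    (hs : Function.Injective s) (hre : ∀ j, (s j).re = 0) {q : ι → ℂ[X]} {N : ℕ}
    (hdeg : ∀ j, (q j).natDegree ≤ N)
    (hlim : Tendsto (fun t : ℝ => ∑ j, (q j).eval (t : ℂ) * exp (s j * t)) atTop (𝓝 0))
    (l : ι) : (q l).coeff N = 0 := by
  refine eq_zero_of_tendsto_sum_mul_exp_s19 hs hre (c := fun j => (q j).coeff N) ?_ l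
  have hscaled : Tendsto (fun t : ℝ => (∑ j, (q j).eval (t : ℂ) * exp (s j * t)) / (t : ℂ) ^ N)
      atTop (𝓝 0) := by
    rw [tendsto_zero_iff_norm_tendsto_zero] at hlim ⊢
    refine squeeze_zero' (Eventually.of_forall fun t => norm_nonneg _) ?_ hlim
    filter_upwards [eventually_ge_atTop 1] with t ht
    rw [norm_div, norm_pow, norm_real, Real.norm_of_nonneg (by linarith)]
    exact div_le_self (norm_nonneg _) (one_le_pow₀ ht)
  have herror : Tendsto (fun t : ℝ => ∑ j, ((q j).eval (t : ℂ) / (t : ℂ) ^ N - (q j).coeff N) *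
      exp (s j * t)) atTop (𝓝 0) := by
    rw [← Finset.sum_const_zero (s := (univ : Finset ι))]
    refine tendsto_finsetSum _ fun j _ => ?_
    have hj := tendsto_sub_nhds_zero_iff.2 (tendsto_eval_ofReal_div_pow_atTop (hdeg j))
    rw [tendsto_zero_iff_norm_tendsto_zero] at hj ⊢
    simpa only [norm_mul, norm_exp_mul_ofReal_of_re_eq_zero (hre j), mul_one] using hj
  refine (sub_zero (0 : ℂ) ▸ hscaled.sub herror).congr fun t => ?_
  simp only [Finset.sum_div, ← Finset.sum_sub_distrib, sub_mul, div_mul_eq_mul_div, sub_sub_cancel]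

theorem eq_zero_of_tendsto_sum_eval_mul_exp_s19 {ι : Type*} [Fintype ι] {s : ι → ℂ}
    (hs : Function.Injective s) (hre : ∀ j, (s j).re = 0) {q : ι → ℂ[X]}
    (hlim : Tendsto (fun t : ℝ => ∑ j, (q j).eval (t : ℂ) * exp (s j * t)) atTop (𝓝 0)) :
    ∀ j, q j = 0 := by
  suffices hdeg : ∀ N : ℕ, (∀ j, (q j).degree < N) → ∀ j, q j = 0 by
    refine hdeg (univ.sup fun j => (q j).natDegree + 1) fun j => ?_
    have hj : (q j).natDegree + 1 ≤ univ.sup fun j => (q j).natDegree + 1 :=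
      le_sup (f := fun j => (q j).natDegree + 1) (mem_univ j)
    exact degree_le_natDegree.trans_lt (by exact_mod_cast hj)
  intro N
  induction N with
  | zero => simp
  | succ N ih =>
    intro hlt
    refine ih fun j => (degree_lt_iff_coeff_zero _ _).2 fun m hm => ?_
    rcases hm.eq_or_lt with rfl | hm
    · exact coeff_eq_zero_of_tendsto_sum_eval_mul_exp_s19 hs hre
        (fun i => natDegree_le_iff_degree_le.2 (Order.le_of_lt_succ (hlt i))) hlim j
    · exact (degree_lt_iff_coeff_zero _ _).1 (hlt j) m hm

theorem stmt19_general {k : ℕ} (s : Fin k → ℂ) (hs : Function.Injective s)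
    (hre : ∀ j, (s j).re = 0)
    (q : Fin k → Polynomial ℂ) (h : ℝ → ℂ)
    (hdec : ∀ n : ℕ, ∃ C : ℝ, ∀ t : ℝ, 0 ≤ t → t ^ n * ‖h t‖ ≤ C)
    (g : ℝ → ℂ)
    (hg : ∀ t : ℝ, g t = ∑ j, (q j).eval (t : ℂ) * Complex.exp (s j * t) + h t)
    (hlim : Filter.Tendsto g Filter.atTop (nhds 0)) :
    ∀ j, q j = 0 := by
  obtain ⟨C, hC⟩ := hdec 1
  have hh : Tendsto h atTop (𝓝 0) :=
    tendsto_zero_of_forall_mul_norm_le fun t ht => pow_one t ▸ hC t ht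
  refine eq_zero_of_tendsto_sum_eval_mul_exp_s19 hs hre ?_
  simpa [hg] using hlim.sub hh

/-- If `g(t) = ∑_j q_j(t) e^{s_j t} + h(t)` with pairwise distinct purely
imaginary exponents `s_j`, polynomials `q_j` and a rapidly decreasing `h`, and
`g(t) → 0` as `t → ∞`, then all the polynomials `q_j` vanish. -/
theorem stmt19 {k : ℕ} (s : Fin k → ℂ) (hs : Function.Injective s)
    (hre : ∀ j, (s j).re = 0)
    (q : Fin k → Polynomial ℂ) (h : ℝ → ℂ)
    (hcont : ContinuousOn h (Set.Ici 0))
    (hdec : ∀ n : ℕ, ∃ C : ℝ, ∀ t : ℝ, 0 ≤ t → t ^ n * ‖h t‖ ≤ C)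
    (g : ℝ → ℂ)
    (hg : ∀ t : ℝ, g t = ∑ j, (q j).eval (t : ℂ) * Complex.exp (s j * t) + h t)
    (hlim : Filter.Tendsto g Filter.atTop (nhds 0)) :
    ∀ j, q j = 0 :=
  stmt19_general s hs hre q h hdec g hg hlim
end
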